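/- Let X be a finite-dimensional real vector space and q an asymmetric norm on X. If the set E of extreme points of B_1^q[0] + θ_q is q^s-bounded (i.e. E ⊆ h·B_1^{q^s}[0] for some h > 0), then q is right bounded. -/

import Mathlib

open Pointwise Set

/-- An asymmetric norm on a real vector space `X`. -/
structure IsAsymmetricNorm {X : Type*} [AddCommGroup X] [Module ℝ X] (q : X → ℝ) : Prop where
  nonneg : ∀ x, 0 ≤ q x
  smul_eq : ∀ a : ℝ, 0 ≤ a → ∀ x, q (a • x) = a * q x
  add_le : ∀ x y, q (x + y) ≤ q x + q y
  eq_zero : ∀ x, q x = 0 → q (-x) = 0 → x = 0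

/-- The topology `τ_q` generated by the open balls of `q`. -/
def asymTop {X : Type*} [AddCommGroup X] [Module ℝ X] (q : X → ℝ) : TopologicalSpace X :=
  TopologicalSpace.generateFrom {U | ∃ x : X, ∃ ε : ℝ, 0 < ε ∧ U = {y | q (y - x) < ε}}

/-- The symmetrization `q^s` of `q`. -/
def symNorm {X : Type*} [AddCommGroup X] (q : X → ℝ) (x : X) : ℝ := max (q x) (q (-x))

/-- The cone `θ_q = {x : q x = 0}`. -/
def theta {X : Type*} [AddCommGroup X] (q : X → ℝ) : Set X := {x | q x = 0}

/-- The closed ball `B_r^q[x] = {y : q (y - x) ≤ r}`. -/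
def closedBallA {X : Type*} [AddCommGroup X] (q : X → ℝ) (x : X) (r : ℝ) : Set X :=
  {y | q (y - x) ≤ r}

/-- A set `K` is strongly compact (w.r.t. the asymmetric norm `q`) if there is a set `S`,
compact in the topology of the norm `q^s`, with `S ⊆ K ⊆ S + θ_q`. -/
def StronglyCompact {X : Type*} [AddCommGroup X] [Module ℝ X] (q : X → ℝ) (K : Set X) : Prop :=
  ∃ S : Set X, @IsCompact X (asymTop (symNorm q)) S ∧ S ⊆ K ∧ K ⊆ S + theta q

/-- `q` is right bounded if `r • B_1^q[0] ⊆ B_1^{q^s}[0] + θ_q` for some `r > 0`. -/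
def RightBounded {X : Type*} [AddCommGroup X] [Module ℝ X] (q : X → ℝ) : Prop :=
  ∃ r : ℝ, 0 < r ∧ r • closedBallA q 0 1 ⊆ closedBallA (symNorm q) 0 1 + theta q

/-- `q` is 1-bounded if `B_1^q[0] ⊆ B_1^{q^s}[0] + θ_q`. -/
def OneBounded {X : Type*} [AddCommGroup X] [Module ℝ X] (q : X → ℝ) : Prop :=
  closedBallA q 0 1 ⊆ closedBallA (symNorm q) 0 1 + theta q

/-- Two asymmetric norms are equivalent if `κ·q ≤ p ≤ l·q` for some `κ, l > 0`. -/
def EquivNorms {X : Type*} [AddCommGroup X] (p q : X → ℝ) : Prop :=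
  ∃ κ l : ℝ, 0 < κ ∧ 0 < l ∧ ∀ x, κ * q x ≤ p x ∧ p x ≤ l * q x

/-- `X` is strongly locally compact (w.r.t. `τ_q`) if every point has a local base of
strongly compact sets. -/
def StronglyLocallyCompact {X : Type*} [AddCommGroup X] [Module ℝ X] (q : X → ℝ) : Prop :=
  ∀ x : X, ∀ U ∈ @nhds X (asymTop q) x,
    ∃ K : Set X, StronglyCompact q K ∧ K ∈ @nhds X (asymTop q) x ∧ K ⊆ U


/-!
Since `q ≤ 1` is stable under adding elements of `θ_q`, we have `B_1^q[0] + θ_q = B_1^q[0] =: B`,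
and it suffices to show `B ⊆ A + θ_q` for the compact convex set `A = h • B_1^{q^s}[0]`, which
contains the extreme points of `B`; then `r = 1/h` works. Equip `X` with the norm `q^s`.
If `x ∈ B \ (A + θ_q)`, the compact convex set `x - A` misses the closed salient cone `θ_q`, so
some functional `f` is negative on `x - A` and positive on `θ_q \ {0}`. The latter makes
`{y ∈ B | f y ≤ f x}` compact, so `f` attains its minimum over `B` on a compact exposed face.
An extreme point of that face is an extreme point of `B`, hence lies in `A`, where `f > f x`.
-/

open Topology

namespace IsAsymmetricNorm

section Algebra

variable {X : Type*} [AddCommGroup X] [Module ℝ X] {q : X → ℝ}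

theorem map_zero (hq : IsAsymmetricNorm q) : q 0 = 0 := by
  simpa using hq.smul_eq 0 le_rfl 0

theorem symNorm_smul (hq : IsAsymmetricNorm q) (a : ℝ) (x : X) :
    symNorm q (a • x) = |a| * symNorm q x := by
  rcases le_or_gt 0 a with ha | ha
  · rw [symNorm, symNorm, ← smul_neg, hq.smul_eq a ha, hq.smul_eq a ha, abs_of_nonneg ha,
      mul_max_of_nonneg _ _ ha]
  · have hna : 0 ≤ -a := by linarith
    rw [symNorm, symNorm, ← neg_smul, ← neg_smul_neg a x, hq.smul_eq _ hna, hq.smul_eq _ hna,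
      abs_of_neg ha, mul_max_of_nonneg _ _ hna, max_comm]

def symNormAddGroupNorm (hq : IsAsymmetricNorm q) : AddGroupNorm X where
  toFun := symNorm q
  map_zero' := by simp [symNorm, hq.map_zero]
  add_le' x y := by
    apply max_le
    · exact (hq.add_le x y).trans (add_le_add (le_max_left _ _) (le_max_left _ _))
    · rw [neg_add]
      exact (hq.add_le (-x) (-y)).trans (add_le_add (le_max_right _ _) (le_max_right _ _))
  neg' x := by simp only [symNorm, neg_neg, max_comm]
  eq_zero_of_map_eq_zero' x hx :=
    hq.eq_zero x (le_antisymm ((le_max_left _ _).trans hx.le) (hq.nonneg x))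
      (le_antisymm ((le_max_right _ _).trans hx.le) (hq.nonneg (-x)))

theorem add_mem_theta (hq : IsAsymmetricNorm q) {y z : X} (hy : y ∈ theta q)
    (hz : z ∈ theta q) : y + z ∈ theta q :=
  le_antisymm ((hq.add_le y z).trans_eq (by rw [hy, hz, add_zero])) (hq.nonneg _)

theorem smul_mem_theta (hq : IsAsymmetricNorm q) {c : ℝ} (hc : 0 ≤ c) {z : X}
    (hz : z ∈ theta q) : c • z ∈ theta q := by
  change q (c • z) = 0
  rw [hq.smul_eq c hc, hz, mul_zero]

theorem closedBallA_add_theta (hq : IsAsymmetricNorm q) :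
    closedBallA q 0 1 + theta q = closedBallA q 0 1 := by
  refine subset_antisymm ?_ fun y hy => ⟨y, hy, 0, hq.map_zero, add_zero y⟩
  rintro _ ⟨p, hp, z, hz, rfl⟩
  change q (p + z - 0) ≤ 1
  have hp' : q (p - 0) ≤ 1 := hp
  rw [sub_zero] at hp' ⊢
  have hz' : q z = 0 := hz
  linarith [hq.add_le p z]

end Algebra

section Normed

variable {E : Type*} [NormedAddCommGroup E] [NormedSpace ℝ E] {q : E → ℝ}

theorem lipschitzWith_one (hq : IsAsymmetricNorm q) (hle : ∀ x, q x ≤ ‖x‖) :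
    LipschitzWith 1 q :=
  LipschitzWith.of_le_add fun x y => by
    simpa [dist_eq_norm] using (hq.add_le (x - y) y).trans (by linarith [hle (x - y)])

def thetaCone (hq : IsAsymmetricNorm q) (hcont : Continuous q) : ProperCone ℝ E where
  carrier := theta q
  add_mem' := hq.add_mem_theta
  zero_mem' := hq.map_zero
  smul_mem' c _ hz := hq.smul_mem_theta c.2 hz
  isClosed' := isClosed_singleton.preimage hcont

end Normed

end IsAsymmetricNorm

section FiniteDimensional

variable {E : Type*} [NormedAddCommGroup E] [NormedSpace ℝ E] [FiniteDimensional ℝ E]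

theorem exists_pos_mul_norm_le {φ : E → ℝ} (hφ : Continuous φ)
    (hsmul : ∀ c : ℝ, 0 ≤ c → ∀ x, φ (c • x) = c * φ x) (hpos : ∀ x, x ≠ 0 → 0 < φ x) :
    ∃ m > 0, ∀ x, m * ‖x‖ ≤ φ x := by
  obtain ⟨m, hm, hmin⟩ := (isCompact_sphere (0 : E) 1).exists_forall_le' hφ.continuousOn
    fun u hu => hpos u (ne_zero_of_mem_unit_sphere ⟨u, hu⟩)
  refine ⟨m, hm, fun x => ?_⟩
  rcases eq_or_ne x 0 with rfl | hx
  · simpa using (hsmul 0 le_rfl 0).ge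
  · have hxpos : 0 < ‖x‖ := norm_pos_iff.2 hx
    have h := hmin (‖x‖⁻¹ • x) (by simp [norm_smul, hxpos.ne'])
    rwa [hsmul _ (inv_nonneg.2 hxpos.le), le_inv_mul_iff₀ hxpos, mul_comm] at h

theorem ProperCone.exists_pos_of_salient (C : ProperCone ℝ E) (hC : ∀ z ∈ C, -z ∈ C → z = 0) :
    ∃ g : StrongDual ℝ E, ∀ z ∈ C, z ≠ 0 → 0 < g z := by
  have hsep : ∀ z ∈ C, z ≠ 0 → ∃ f : StrongDual ℝ E, (∀ y ∈ C, 0 ≤ f y) ∧ 0 < f z := by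
    intro z hz hz0
    obtain ⟨f, hfC, hfz⟩ := C.hyperplane_separation_point (x₀ := -z) fun h => hz0 (hC z hz h)
    exact ⟨f, hfC, by simpa using hfz⟩
  choose! f hfC hfpos using hsep
  have hbase : IsCompact ((C : Set E) ∩ Metric.sphere 0 1) :=
    (isCompact_sphere 0 1).inter_left C.isClosed
  have hbase0 : ∀ z ∈ (C : Set E) ∩ Metric.sphere 0 1, z ≠ 0 := fun z hz =>
    ne_zero_of_mem_unit_sphere ⟨z, hz.2⟩
  -- `g` is the sum of finitely many `f z` whose positivity sets cover the compact base
  obtain ⟨t, htS, hcover⟩ := hbase.elim_nhds_subcover (fun z => {y | 0 < f z y}) fun z hz =>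
    (isOpen_lt continuous_const (f z).continuous).mem_nhds (hfpos z hz.1 (hbase0 z hz))
  refine ⟨∑ z ∈ t, f z, fun y hy hy0 => ?_⟩
  have hypos : 0 < ‖y‖ := norm_pos_iff.2 hy0
  have hyC : ‖y‖⁻¹ • y ∈ C := C.smul_mem hy (inv_nonneg.2 hypos.le)
  obtain ⟨z, hzt, hz⟩ := Set.mem_iUnion₂.1 (hcover ⟨hyC, by simp [norm_smul, hypos.ne']⟩)
  have h := Finset.sum_pos' (fun w hw => hfC w (htS w hw).1 (hbase0 w (htS w hw)) _ hyC)
    ⟨z, hzt, hz⟩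
  simp only [map_smul, smul_eq_mul, ← Finset.mul_sum] at h
  rw [sum_apply]
  exact pos_of_mul_pos_right h (inv_nonneg.2 hypos.le)

theorem ProperCone.hyperplane_separation_of_salient (C : ProperCone ℝ E)
    (hC : ∀ z ∈ C, -z ∈ C → z = 0) {K : Set E} (hKconv : Convex ℝ K) (hKcomp : IsCompact K)
    (hKC : Disjoint K C) :
    ∃ f : StrongDual ℝ E, (∀ z ∈ C, z ≠ 0 → 0 < f z) ∧ ∀ x ∈ K, f x < 0 := by
  obtain ⟨g, hg⟩ := C.exists_pos_of_salient hC
  obtain ⟨f, hfC, hfK⟩ := C.hyperplane_separation hKconv hKcomp hKC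
  have hsmall : ∀ᶠ δ in 𝓝 (0 : ℝ), ∀ x ∈ K, f x + δ * g x < 0 :=
    hKcomp.eventually_forall_of_forall_eventually fun x hx =>
      (isOpen_lt (by fun_prop) continuous_const).mem_nhds (by simpa using hfK x hx)
  obtain ⟨δ, hδK, hδ⟩ :=
    ((hsmall.filter_mono (nhdsWithin_le_nhds (s := Set.Ioi 0))).and self_mem_nhdsWithin).exists
  refine ⟨f + δ • g, fun z hz hz0 => ?_, fun x hx => by simpa using hδK x hx⟩
  have := mul_pos (show (0 : ℝ) < δ from hδ) (hg z hz hz0)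
  simpa using add_pos_of_nonneg_of_pos (hfC z hz) this

end FiniteDimensional

theorem ContinuousLinearMap.toExposed_inter_le_apply {E : Type*} [AddCommMonoid E] [Module ℝ E]
    [TopologicalSpace E] (l : StrongDual ℝ E) {A : Set E} {x : E} (hx : x ∈ A) :
    l.toExposed (A ∩ {y | l x ≤ l y}) = l.toExposed A := by
  ext y
  simp only [ContinuousLinearMap.toExposed, Set.mem_inter_iff, Set.mem_ofPred_eq]
  constructor
  · rintro ⟨⟨hyA, -⟩, hmax⟩
    refine ⟨hyA, fun z hz => ?_⟩
    rcases le_total (l x) (l z) with hxz | hzx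
    · exact hmax z ⟨hz, hxz⟩
    · exact hzx.trans (hmax x ⟨hx, le_rfl⟩)
  · rintro ⟨hyA, hmax⟩
    exact ⟨⟨hyA, hmax x hx⟩, fun z hz => hmax z hz.1⟩

theorem exists_mem_extremePoints_le_apply {E : Type*} [AddCommGroup E] [Module ℝ E]
    [TopologicalSpace E] [T2Space E] [IsTopologicalAddGroup E] [ContinuousSMul ℝ E]
    [LocallyConvexSpace ℝ E] (l : StrongDual ℝ E) {A : Set E} {x : E} (hx : x ∈ A)
    (hK : IsCompact (A ∩ {y | l x ≤ l y})) :
    ∃ e ∈ A.extremePoints ℝ, l x ≤ l e := by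
  obtain ⟨y, hyK, hymax⟩ :=
    hK.exists_isMaxOn ⟨x, hx, (le_rfl : l x ≤ l x)⟩ l.continuous.continuousOn
  have hface :=
    ContinuousLinearMap.toExposed.isExposed (𝕜 := ℝ) (l := l) (A := A ∩ {y | l x ≤ l y})
  obtain ⟨e, he⟩ := (hface.isCompact hK).extremePoints_nonempty ⟨y, hyK, isMaxOn_iff.1 hymax⟩
  refine ⟨e, ?_, (hface.subset (extremePoints_subset he)).2⟩
  rw [l.toExposed_inter_le_apply hx] at he
  exact ContinuousLinearMap.toExposed.isExposed.isExtreme.extremePoints_subset_extremePoints he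

namespace IsAsymmetricNorm

theorem closedBallA_subset_add_theta {E : Type*} [NormedAddCommGroup E] [NormedSpace ℝ E]
    [FiniteDimensional ℝ E] {q : E → ℝ} (hq : IsAsymmetricNorm q) (hcont : Continuous q)
    {A : Set E} (hA : IsCompact A) (hAconv : Convex ℝ A)
    (hext : (closedBallA q 0 1).extremePoints ℝ ⊆ A) :
    closedBallA q 0 1 ⊆ A + theta q := by
  intro x hx
  by_contra hxA
  have hdisj : Disjoint ({x} + -A) (hq.thetaCone hcont : Set E) := by
    refine Set.disjoint_left.2 ?_
    rintro _ ⟨y, hy, w, hw, rfl⟩ hθ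
    rw [Set.mem_singleton_iff] at hy
    subst hy
    exact hxA ⟨-w, hw, y + w, hθ, neg_add_cancel_comm_assoc w y⟩
  obtain ⟨f, hfθ, hfA⟩ := (hq.thetaCone hcont).hyperplane_separation_of_salient
    (fun z => hq.eq_zero z) ((convex_singleton x).add hAconv.neg)
    (isCompact_singleton.add hA.neg) hdisj
  -- `max q f` vanishes only at `0`, so the sublevel sets of `f` in `B_1^q[0]` are bounded
  obtain ⟨m, hm, hmf⟩ := exists_pos_mul_norm_le (φ := fun y => max (q y) (f y))
    (hcont.max f.continuous) (fun c hc y => by simp [hq.smul_eq c hc, mul_max_of_nonneg _ _ hc])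
    fun y hy => by
      rcases (hq.nonneg y).lt_or_eq with hqy | hqy
      · exact lt_max_of_lt_left hqy
      · exact lt_max_of_lt_right (hfθ y hqy.symm hy)
  have hK : IsCompact (closedBallA q 0 1 ∩ {y | (-f) x ≤ (-f) y}) := by
    refine Metric.isCompact_of_isClosed_isBounded ?_ ?_
    · exact (isClosed_le (hcont.comp (continuous_id.sub continuous_const)) continuous_const).inter
        (isClosed_le continuous_const (-f).continuous)
    · refine isBounded_iff_forall_norm_le.2 ⟨max 1 (f x) / m, fun y ⟨hy1, hy2⟩ => ?_⟩
      have hqy : q y ≤ 1 := by simpa [closedBallA] using hy1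
      have hfy : f y ≤ f x := by simpa using hy2
      rw [le_div_iff₀ hm, mul_comm]
      exact (hmf y).trans (max_le_max hqy hfy)
  obtain ⟨e, he, hfe⟩ := exists_mem_extremePoints_le_apply (-f) hx hK
  have := hfA (x + -e) ⟨x, rfl, -e, by simpa using hext he, rfl⟩
  simp only [neg_apply, map_add, map_neg] at hfe this
  linarith

end IsAsymmetricNorm

theorem statement18 {X : Type*} [AddCommGroup X] [Module ℝ X] [FiniteDimensional ℝ X]
    (q : X → ℝ) (hq : IsAsymmetricNorm q)
    (hE : ∃ h : ℝ, 0 < h ∧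
      Set.extremePoints ℝ (closedBallA q 0 1 + theta q) ⊆ h • closedBallA (symNorm q) 0 1) :
    RightBounded q := by
  obtain ⟨h, hh, hE⟩ := hE
  let : NormedAddCommGroup X := hq.symNormAddGroupNorm.toNormedAddCommGroup
  let : NormedSpace ℝ X := ⟨fun a x => (hq.symNorm_smul a x).le⟩
  have hball : closedBallA (symNorm q) 0 1 = Metric.closedBall (0 : X) 1 := by
    ext y
    simp only [closedBallA, Metric.mem_closedBall, dist_eq_norm]
    rfl
  rw [hq.closedBallA_add_theta, hball] at hE
  have hcover := hq.closedBallA_subset_add_theta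
    (hq.lipschitzWith_one fun x => le_max_left _ _).continuous
    ((isCompact_closedBall 0 1).smul h) ((convex_closedBall 0 1).smul h) hE
  refine ⟨h⁻¹, inv_pos.2 hh, ?_⟩
  rintro _ ⟨x, hx, rfl⟩
  obtain ⟨_, ⟨p, hp, rfl⟩, z, hz, rfl⟩ := hcover hx
  refine ⟨p, hball ▸ hp, h⁻¹ • z, hq.smul_mem_theta (inv_nonneg.2 hh.le) hz, ?_⟩
  simp [smul_add, hh.ne']
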